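/- arXiv:2403.03633 — 2 statements merged into one kernel-verified Lean document; each statement's English description precedes it below -/
import Mathlib

section
/- For any real v_z, the jump update r_z⁺ = r_z, v_z⁺ = v_z - sat(v_z) satisfies ΔV = V(r_z⁺, v_z⁺) - V(r_z, v_z) = -sat(v_z)(2v_z - sat(v_z)) ≤ -v_z·sat(v_z), and this quantity is strictly negative whenever v_z ≠ 0, where V(r_z, v_z) = n²r_z² + v_z². -/
/-- Jump decrease of V(r,v) = n²r² + v² under v⁺ = v - sat(v):
    ΔV = -sat(v)(2v - sat(v)) ≤ -v·sat(v), strictly negative when v ≠ 0. -/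
theorem stmt_2 (n umax : ℝ) (hn : 0 < n) (humax : 0 < umax)
    (sat : ℝ → ℝ) (hsat : ∀ u, sat u = max (-umax) (min u umax))
    (V : ℝ → ℝ → ℝ) (hV : ∀ r v, V r v = n ^ 2 * r ^ 2 + v ^ 2) :
    ∀ rz vz : ℝ,
      V rz (vz - sat vz) - V rz vz = -(sat vz) * (2 * vz - sat vz) ∧
      V rz (vz - sat vz) - V rz vz ≤ -(vz * sat vz) ∧
      (vz ≠ 0 → V rz (vz - sat vz) - V rz vz < 0) := by
  intro rz vz
  have key : sat vz * (vz - sat vz) ≥ 0 ∧ (vz ≠ 0 → 0 < vz * sat vz) := by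
    rw [hsat vz]
    rcases le_total vz umax with h1 | h1
    · rcases le_total (-umax) vz with h2 | h2
      · rw [min_eq_left h1, max_eq_right h2]
        exact ⟨by ring_nf; positivity, fun hne => by
          rcases lt_or_gt_of_ne hne with h | h <;> nlinarith⟩
      · rw [min_eq_left h1, max_eq_left h2]
        exact ⟨by nlinarith, fun _ => by nlinarith⟩
    · rw [min_eq_right h1, max_eq_right (by linarith : -umax ≤ umax)]
      exact ⟨by nlinarith, fun _ => by nlinarith⟩
  obtain ⟨k1, k2⟩ := key
  refine ⟨by rw [hV, hV]; ring, by rw [hV, hV]; nlinarith, ?_⟩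
  intro hne
  have := k2 hne
  rw [hV, hV]; nlinarith
end

section
/- For the iterated map β_{k+1} = β_k - 3·sat(β_k/3) with saturation level u_max > 0, every initial condition β_0 ∈ ℝ reaches exactly 0 after finitely many iterations; specifically, if |β_0| ≤ 3u_max then β_1 = 0, and in general β reaches 0 after at most ⌈|β_0|/(3u_max)⌉ iterations. -/
/-- Finite-time convergence of the iterated map β⁺ = β - 3·sat(β/3):
    if |β₀| ≤ 3u_max then one step gives 0, and in general 0 is reached after
    at most ⌈|β₀|/(3u_max)⌉ iterations. -/
theorem stmt_5 (umax : ℝ) (humax : 0 < umax)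
    (sat : ℝ → ℝ) (hsat : ∀ u, sat u = max (-umax) (min u umax))
    (g : ℝ → ℝ) (hg : ∀ β, g β = β - 3 * sat (β / 3)) :
    ∀ β₀ : ℝ,
      (|β₀| ≤ 3 * umax → g β₀ = 0) ∧
      ∃ k : ℕ, k ≤ ⌈|β₀| / (3 * umax)⌉₊ ∧ g^[k] β₀ = 0 := by
  have hA : ∀ β : ℝ, |β| ≤ 3 * umax → g β = 0 := by
    intro β hβ
    rw [abs_le] at hβ
    have h1 : β / 3 ≤ umax := by linarith
    have h2 : -umax ≤ β / 3 := by linarith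
    have : sat (β / 3) = β / 3 := by
      rw [hsat, min_eq_left h1, max_eq_right h2]
    rw [hg, this]; ring
  have hB : ∀ β : ℝ, 3 * umax < |β| → |g β| = |β| - 3 * umax := by
    intro β hβ
    rcases abs_cases β with ⟨h, hpos⟩ | ⟨h, hneg⟩
    · have hβ' : 3 * umax < β := by rwa [h] at hβ
      have : sat (β / 3) = umax := by
        rw [hsat, min_eq_right (by linarith), max_eq_right (by linarith)]
      rw [hg, this, h, abs_of_nonneg (by linarith)]
    · have hβ' : β < -(3 * umax) := by rw [h] at hβ; linarith
      have : sat (β / 3) = -umax := by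
        rw [hsat, min_eq_left (by linarith), max_eq_left (by linarith)]
      rw [hg, this, h, abs_of_nonpos (by linarith)]; ring
  have hmain : ∀ n : ℕ, ∀ β : ℝ, ⌈|β| / (3 * umax)⌉₊ = n → g^[n] β = 0 := by
    intro n
    induction n with
    | zero =>
      intro β hn
      have h3 : (0:ℝ) < 3 * umax := by linarith
      have hle : |β| / (3 * umax) ≤ 0 := by
        by_contra h
        push_neg at h
        exact absurd hn (Nat.ceil_pos.mpr h).ne'
      have hb0 : β = 0 := by
        rw [abs_eq_zero.symm]
        have h0 : (0:ℝ) ≤ |β| / (3 * umax) := by positivity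
        have : |β| / (3 * umax) = 0 := le_antisymm hle h0
        field_simp at this
        simp [this]
      simp [hb0]
    | succ m ih =>
      intro β hn
      rcases le_or_gt (|β|) (3 * umax) with hle | hlt
      · have hm : m = 0 := by
          have h3 : (0:ℝ) < 3 * umax := by linarith
          have : ⌈|β| / (3 * umax)⌉₊ ≤ 1 := by
            apply Nat.ceil_le.mpr
            push_cast
            rw [div_le_one h3]
            exact hle
          omega
        subst hm
        rw [Function.iterate_succ_apply, hA β hle]
        apply ih
        simp
      · have h3 : (0:ℝ) < 3 * umax := by linarith
        have hge : (1:ℝ) ≤ |β| / (3 * umax) := by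
          rw [le_div_iff₀ h3]; linarith
        have hkey : |g β| / (3 * umax) = |β| / (3 * umax) - 1 := by
          rw [hB β hlt]; field_simp
        have hceil : ⌈|g β| / (3 * umax)⌉₊ = m := by
          have h0 : (0:ℝ) ≤ |g β| / (3 * umax) := by positivity
          have : ⌈|g β| / (3 * umax) + 1⌉₊ = ⌈|g β| / (3 * umax)⌉₊ + 1 := by
            exact_mod_cast Nat.ceil_add_one h0
          have heq : |g β| / (3 * umax) + 1 = |β| / (3 * umax) := by
            rw [hkey]; ring
          rw [heq, hn] at this
          omega
        rw [Function.iterate_succ_apply]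
        exact ih _ hceil
  intro β₀
  exact ⟨hA β₀, ⌈|β₀| / (3 * umax)⌉₊, le_rfl, hmain _ β₀ rfl⟩
end
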